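/- Qudit twirl (Lemma 5): Let A be a nonempty finite type, let F be a finite field of characteristic p with q = |F|, and let ω = exp(2πi/p). For any matrix ρ : Matrix (A × F) (A × F) ℂ, the uniform Weyl twirl on the second factor completely depolarizes it: (1/q²) · ∑_{x ∈ F} ∑_{z ∈ F} (1 ⊗ₖ (X(x)*Z(z))) * ρ * (1 ⊗ₖ (X(x)*Z(z)))† = ρ_A ⊗ₖ ((1/q) • 1), where ρ_A : Matrix A A ℂ is the partial trace of ρ over the second factor, defined entrywise by ρ_A(a,a') = ∑_{b ∈ F} ρ((a,b),(a',b)), 1 denotes the identity matrix of the appropriate size, and ⊗ₖ is the Kronecker product. -/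

import Mathlib

open scoped Kronecker Matrix

/-- The generalized shift ("X") operator on a qudit indexed by the finite field `F`:
`X(x)(a,b) = 1` if `a = b + x` and `0` otherwise. -/
noncomputable def Xmat (F : Type*) [Field F] [Fintype F] [DecidableEq F] (x : F) :
    Matrix F F ℂ :=
  Matrix.of fun a b => if a = b + x then 1 else 0

/-- The generalized clock ("Z") operator on a qudit indexed by the finite field `F`
of characteristic `p`: the diagonal matrix with entries `ω^{tr(b z)}`, where
`ω = exp(2πi/p)`, `tr : F → ZMod p` is the field trace and the exponent is the
canonical representative in `{0, …, p-1}`. -/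
noncomputable def Zmat (F : Type*) [Field F] [Fintype F] [DecidableEq F]
    (p : ℕ) [CharP F p] [Algebra (ZMod p) F] (z : F) :
    Matrix F F ℂ :=
  Matrix.diagonal fun b =>
    (Complex.exp (2 * (Real.pi : ℂ) * Complex.I / (p : ℂ)))
      ^ ((Algebra.trace (ZMod p) F) (b * z)).val

/-- **Qudit twirl (Lemma 5).** Averaging the conjugation by `1 ⊗ X(x)Z(z)` over
all `x, z` in the finite field `F` (with `q = |F|`) completely depolarizes the
second subsystem: the result is `ρ_A ⊗ (1/q) • 1`, where `ρ_A` is the partial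
trace of `ρ` over the second factor. -/
theorem qudit_twirl
    (A : Type*) [Fintype A] [Nonempty A] [DecidableEq A]
    (F : Type*) [Field F] [Fintype F] [DecidableEq F]
    (p : ℕ) [Fact p.Prime] [CharP F p] [Algebra (ZMod p) F]
    (ρ : Matrix (A × F) (A × F) ℂ) :
    (1 / ((Fintype.card F : ℂ)) ^ 2) •
      ∑ x : F, ∑ z : F,
        ((1 : Matrix A A ℂ) ⊗ₖ (Xmat F x * Zmat F p z)) * ρ *
          ((1 : Matrix A A ℂ) ⊗ₖ (Xmat F x * Zmat F p z))ᴴ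
      = (Matrix.of fun a a' : A => ∑ b : F, ρ (a, b) (a', b)) ⊗ₖ
          ((1 / (Fintype.card F : ℂ)) • (1 : Matrix F F ℂ)) := by
  classical
  have hp : p.Prime := Fact.out
  set ω : ℂ := Complex.exp (2 * (Real.pi : ℂ) * Complex.I / (p : ℂ)) with hωdef
  have hprim : IsPrimitiveRoot ω p := Complex.isPrimitiveRoot_exp p hp.ne_zero
  have hω1 : ω ^ p = 1 := hprim.pow_eq_one
  set ψ : AddChar F ℂ :=
    (AddChar.zmodChar p hω1).compAddMonoidHom (Algebra.trace (ZMod p) F).toAddMonoidHom with hψdef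
  have hψ : ∀ t : F, ψ t = ω ^ ((Algebra.trace (ZMod p) F) t).val := fun t => rfl
  -- conj ψ t = ψ (-t)
  have habs : ∀ t : F, ψ t * (starRingEnd ℂ) (ψ t) = 1 := by
    intro t
    have hωabs : ω * (starRingEnd ℂ) ω = 1 := by
      rw [Complex.mul_conj]
      norm_cast
      rw [Complex.normSq_eq_norm_sq, hωdef, Complex.norm_exp]
      simp [Complex.div_re]
    rw [hψ, map_pow, ← mul_pow, hωabs, one_pow]
  have hconj : ∀ t : F, (starRingEnd ℂ) (ψ t) = ψ (-t) := by
    intro t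
    rw [AddChar.map_neg_eq_inv]
    exact eq_inv_of_mul_eq_one_left (by rw [mul_comm]; exact habs t)
  -- character sum
  have hcard : (Fintype.card F : ℂ) ≠ 0 := Nat.cast_ne_zero.mpr Fintype.card_ne_zero
  have hsum : ∀ c : F, ∑ z : F, ψ (c * z) = if c = 0 then (Fintype.card F : ℂ) else 0 := by
    intro c
    by_cases hc : c = 0
    · simp [hc]
    · rw [if_neg hc]
      have h1 : ∀ z : F, ψ (c * z) = (ψ.mulShift c) z := fun z => rfl
      simp_rw [h1]
      rw [AddChar.sum_eq_zero_iff_ne_zero, AddChar.ne_zero_iff]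
      obtain ⟨z, hz⟩ : ∃ z : F, Algebra.trace (ZMod p) F (c * z) ≠ 0 := by
        have htr := (traceForm_nondegenerate (ZMod p) F).1 c
        simp_rw [Algebra.traceForm_apply] at htr
        by_contra! hf
        exact hc (htr hf)
      refine ⟨z, ?_⟩
      rw [AddChar.mulShift_apply, hψ]
      exact hprim.pow_ne_one_of_pos_of_lt (
        (fun h => hz ((ZMod.val_eq_zero _).mp h))) (ZMod.val_lt _)
  -- entry of X * Z
  have hXZ : ∀ (x z b d : F),
      (Xmat F x * Zmat F p z) b d = if d = b - x then ψ (d * z) else 0 := by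
    intro x z b d
    rw [Xmat, Zmat, Matrix.mul_diagonal]
    have : (b = d + x) = (d = b - x) := by
      apply propext; constructor <;> intro h <;> [exact (eq_sub_iff_add_eq.mpr h.symm); exact (by rw [h]; ring)]
    simp [this, hψ, ite_mul, hωdef]
  -- entry of the conjugated matrix
  have key : ∀ (x z : F) (a a' : A) (b b' : F),
      (((1 : Matrix A A ℂ) ⊗ₖ (Xmat F x * Zmat F p z)) * ρ *
        (((1 : Matrix A A ℂ) ⊗ₖ (Xmat F x * Zmat F p z)))ᴴ) (a, b) (a', b')
      = ψ ((b - b') * z) * ρ (a, b - x) (a', b' - x) := by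
    intro x z a a' b b'
    simp only [Matrix.mul_apply, Matrix.conjTranspose_apply, Matrix.kroneckerMap_apply,
      Matrix.one_apply, hXZ, Fintype.sum_prod_type, ite_mul, one_mul, zero_mul, mul_ite,
      mul_zero, Finset.sum_ite_eq, Finset.sum_ite_eq', Finset.mem_univ, if_true, map_mul,
      map_one, map_zero, hconj]
    simp only [apply_ite (star : ℂ → ℂ), star_zero, mul_ite, mul_zero,
      Finset.sum_ite_eq', Finset.sum_ite_eq, Finset.mem_univ, if_true]
    rw [Complex.star_def, hconj, mul_right_comm, ← AddChar.map_add_eq_mul]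
    congr 2
    ring
  apply Matrix.ext
  rintro ⟨a, b⟩ ⟨a', b'⟩
  simp only [Matrix.smul_apply, Matrix.sum_apply, smul_eq_mul, key,
    Matrix.kroneckerMap_apply, Matrix.of_apply, Matrix.one_apply]
  simp_rw [← Finset.sum_mul, hsum (b - b')]
  by_cases hbb : b = b'
  · subst hbb
    simp only [sub_self, if_pos rfl, if_true]
    have hre : ∑ x : F, ρ (a, b - x) (a', b - x) = ∑ d : F, ρ (a, d) (a', d) :=
      Fintype.sum_equiv (Equiv.subLeft b) _ _ (fun x => rfl)
    rw [← Finset.mul_sum, hre]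
    field_simp
  · simp [hbb, sub_ne_zero.mpr hbb]
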